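/- arXiv:2506.24013 — 6 statements merged into one kernel-verified Lean document; each statement's English description precedes it below -/
import Mathlib

section
/- Let β⁽⁰⁾, β⁽ʲ⁾ ∈ ℝ^p be nonzero vectors satisfying the angle-based similarity |1 − ⟨β⁽⁰⁾, β⁽ʲ⁾⟩² / (‖β⁽⁰⁾‖₂² ‖β⁽ʲ⁾‖₂²)| ≤ h for some h ≥ 0. Then, taking α = ⟨β⁽⁰⁾, β⁽ʲ⁾⟩ / ‖β⁽ʲ⁾‖₂², one has ‖β⁽⁰⁾ − α β⁽ʲ⁾‖₂² ≤ h ‖β⁽⁰⁾‖₂², and consequently the projection-based similarity ‖β⁽⁰⁾ − α β⁽ʲ⁾‖₁ ≤ √(p h) ‖β⁽⁰⁾‖₂ holds. -/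
/-- If nonzero vectors `β⁽⁰⁾, β⁽ʲ⁾ ∈ ℝ^p` satisfy the angle-based similarity
`|1 - ⟨β⁽⁰⁾,β⁽ʲ⁾⟩² / (‖β⁽⁰⁾‖₂² ‖β⁽ʲ⁾‖₂²)| ≤ h` for some `h ≥ 0`, then with
`α = ⟨β⁽⁰⁾,β⁽ʲ⁾⟩ / ‖β⁽ʲ⁾‖₂²` we have `‖β⁽⁰⁾ - α β⁽ʲ⁾‖₂² ≤ h ‖β⁽⁰⁾‖₂²` and consequently
`‖β⁽⁰⁾ - α β⁽ʲ⁾‖₁ ≤ √(p h) ‖β⁽⁰⁾‖₂`. -/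
theorem angle_similarity_implies_projection_similarity
    (p : ℕ) (β0 βj : Fin p → ℝ) (hβ0 : β0 ≠ 0) (hβj : βj ≠ 0)
    (h : ℝ) (hh : 0 ≤ h)
    (hang : |1 - (∑ i, β0 i * βj i) ^ 2 /
        ((∑ i, (β0 i) ^ 2) * (∑ i, (βj i) ^ 2))| ≤ h) :
    (∑ i, (β0 i - ((∑ i, β0 i * βj i) / (∑ i, (βj i) ^ 2)) * βj i) ^ 2
        ≤ h * ∑ i, (β0 i) ^ 2) ∧
    (∑ i, |β0 i - ((∑ i, β0 i * βj i) / (∑ i, (βj i) ^ 2)) * βj i|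
        ≤ Real.sqrt (p * h) * Real.sqrt (∑ i, (β0 i) ^ 2)) := by
  set A := ∑ i, (β0 i) ^ 2 with hAdef
  set B := ∑ i, (βj i) ^ 2 with hBdef
  set C := ∑ i, β0 i * βj i with hCdef
  have hA : 0 < A := by
    obtain ⟨i, hi⟩ := Function.ne_iff.mp hβ0
    have hi' := (by simpa using hi : _ ≠ (0:ℝ))
    exact Finset.sum_pos' (fun j _ => sq_nonneg _) ⟨i, Finset.mem_univ i, by positivity⟩
  have hB : 0 < B := by
    obtain ⟨i, hi⟩ := Function.ne_iff.mp hβj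
    have hi' := (by simpa using hi : _ ≠ (0:ℝ))
    exact Finset.sum_pos' (fun j _ => sq_nonneg _) ⟨i, Finset.mem_univ i, by positivity⟩
  have hexp : ∑ i, (β0 i - (C / B) * βj i) ^ 2 = A - C ^ 2 / B := by
    have : ∀ i, (β0 i - (C / B) * βj i) ^ 2
        = (β0 i) ^ 2 - (2 * C / B) * (β0 i * βj i) + (C / B) ^ 2 * (βj i) ^ 2 := by
      intro i; ring
    rw [Finset.sum_congr rfl fun i _ => this i]
    rw [Finset.sum_add_distrib, Finset.sum_sub_distrib, ← Finset.mul_sum, ← Finset.mul_sum]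
    field_simp
    ring
  have h1 : 1 - C ^ 2 / (A * B) ≤ h := (abs_le.mp hang).2
  have key : A - C ^ 2 / B ≤ h * A := by
    have := mul_le_mul_of_nonneg_left h1 hA.le
    have hAB : A * (C ^ 2 / (A * B)) = C ^ 2 / B := by
      field_simp
    nlinarith
  constructor
  · rw [hexp]; exact key
  · have hcs : (∑ i, |β0 i - (C / B) * βj i|) ^ 2
        ≤ p * ∑ i, (β0 i - (C / B) * βj i) ^ 2 := by
      have := sq_sum_le_card_mul_sum_sq (s := (Finset.univ : Finset (Fin p)))
        (f := fun i => |β0 i - (C / B) * βj i|)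
      simpa [sq_abs] using this
    have hsumnn : 0 ≤ ∑ i, |β0 i - (C / B) * βj i| :=
      Finset.sum_nonneg fun i _ => abs_nonneg _
    have h2 : (∑ i, |β0 i - (C / B) * βj i|) ^ 2 ≤ p * (h * A) := by
      refine hcs.trans ?_
      have := (hexp ▸ key : ∑ i, (β0 i - (C / B) * βj i) ^ 2 ≤ h * A)
      exact mul_le_mul_of_nonneg_left this (Nat.cast_nonneg p)
    calc ∑ i, |β0 i - (C / B) * βj i|
        ≤ Real.sqrt (p * (h * A)) := by
          rw [← Real.sqrt_sq hsumnn]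
          exact Real.sqrt_le_sqrt h2
      _ = Real.sqrt (p * h) * Real.sqrt A := by
          rw [← mul_assoc, Real.sqrt_mul (by positivity)]
end

section
/- (Cone condition for the Lasso error.) Let X ∈ ℝ^{n×p} with columns X_{·1},…,X_{·p}, let β* ∈ ℝ^p with support S = {k : β*_k ≠ 0}, let ε ∈ ℝ^n, and y = Xβ* + ε. Suppose λ > 0 satisfies λ ≥ (2/n) max_{1≤k≤p} |⟨X_{·k}, ε⟩|, and let β̂ be a global minimizer of (1/(2n))‖y − Xβ‖₂² + λ‖β‖₁. Then the error Δ = β̂ − β* satisfies ∑_{k ∉ S} |Δ_k| ≤ 3 ∑_{k ∈ S} |Δ_k|. -/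
/-- Cone condition for the Lasso error: if `y = Xβ* + ε`, the support of `β*`
is `S`, `λ ≥ (2/n) max_k |⟨X_{·k}, ε⟩|`, and `β̂` is a global minimizer of the Lasso
objective, then the error `Δ = β̂ - β*` satisfies `∑_{k ∉ S} |Δ_k| ≤ 3 ∑_{k ∈ S} |Δ_k|`. -/
theorem lasso_cone_condition
    (n p : ℕ) (hn : 0 < n)
    (X : Matrix (Fin n) (Fin p) ℝ) (βstar : Fin p → ℝ) (ε : Fin n → ℝ)
    (y : Fin n → ℝ) (hy : y = X.mulVec βstar + ε)
    (S : Finset (Fin p)) (hS : ∀ k, k ∈ S ↔ βstar k ≠ 0)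
    (lam : ℝ) (hlam : 0 < lam)
    (hlam_ge : ∀ k : Fin p, (2 / n) * |∑ i, X i k * ε i| ≤ lam)
    (βhat : Fin p → ℝ)
    (hmin : ∀ β : Fin p → ℝ,
      (1 / (2 * n)) * ∑ i, (y i - X.mulVec βhat i) ^ 2 + lam * ∑ k, |βhat k|
        ≤ (1 / (2 * n)) * ∑ i, (y i - X.mulVec β i) ^ 2 + lam * ∑ k, |β k|) :
    ∑ k ∈ Sᶜ, |βhat k - βstar k| ≤ 3 * ∑ k ∈ S, |βhat k - βstar k| := by
  have hnpos : (0:ℝ) < n := by exact_mod_cast hn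
  set c : Fin p → ℝ := fun k => ∑ i, X i k * ε i with hc
  have hck : ∀ k, |c k| ≤ n * lam / 2 := by
    intro k
    have h := hlam_ge k
    rw [div_mul_eq_mul_div, div_le_iff₀ hnpos] at h
    linarith
  set D : Fin n → ℝ := fun i => ∑ k, X i k * (βhat k - βstar k) with hD
  have hyε : ∀ i, y i - X.mulVec βstar i = ε i := by
    intro i; simp [hy]
  have hyh : ∀ i, y i - X.mulVec βhat i = ε i - D i := by
    intro i
    have h1 : X.mulVec βhat i - X.mulVec βstar i = D i := by
      simp [Matrix.mulVec, dotProduct, hD, mul_sub, Finset.sum_sub_distrib]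
    have h2 := hyε i
    linarith
  have hexp : ∑ i, (y i - X.mulVec βhat i)^2
      = ∑ i, ε i ^ 2 - 2 * ∑ i, ε i * D i + ∑ i, D i ^ 2 := by
    rw [Finset.mul_sum, ← Finset.sum_sub_distrib, ← Finset.sum_add_distrib]
    exact Finset.sum_congr rfl fun i _ => by rw [hyh i]; ring
  have hE : ∑ i, (y i - X.mulVec βstar i)^2 = ∑ i, ε i ^ 2 :=
    Finset.sum_congr rfl fun i _ => by rw [hyε i]
  have hA := hmin βstar
  rw [hexp, hE] at hA
  have hQ : (0:ℝ) ≤ ∑ i, D i ^ 2 := Finset.sum_nonneg fun i _ => sq_nonneg _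
  -- basic inequality: lam * ‖β̂‖₁ ≤ T/n + lam * ‖β*‖₁ where T = ∑ ε D
  have hbasic : lam * ∑ k, |βhat k| ≤ (∑ i, ε i * D i) / n + lam * ∑ k, |βstar k| := by
    have h2n : (0:ℝ) < 2 * n := by linarith
    have hr : (1 / (2 * (n:ℝ))) * (∑ i, ε i ^ 2 - 2 * ∑ i, ε i * D i + ∑ i, D i ^ 2)
        = (1 / (2 * (n:ℝ))) * ∑ i, ε i ^ 2 - (∑ i, ε i * D i) / n
          + (∑ i, D i ^ 2) / (2 * n) := by
      field_simp
    rw [hr] at hA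
    have hQ' : (0:ℝ) ≤ (∑ i, D i ^ 2) / (2 * n) := div_nonneg hQ (le_of_lt h2n)
    linarith
  -- T = ∑ k, Δ k * c k
  have hT : ∑ i, ε i * D i = ∑ k, (βhat k - βstar k) * c k := by
    simp_rw [hD, Finset.mul_sum]
    rw [Finset.sum_comm]
    exact Finset.sum_congr rfl fun k _ => by
      rw [hc, Finset.mul_sum]
      exact Finset.sum_congr rfl fun i _ => by ring
  have hTle : ∑ i, ε i * D i ≤ (n * lam / 2) * ∑ k, |βhat k - βstar k| := by
    rw [hT, Finset.mul_sum]
    calc ∑ k, (βhat k - βstar k) * c k ≤ ∑ k, |(βhat k - βstar k) * c k| :=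
          Finset.sum_le_sum fun k _ => le_abs_self _
      _ ≤ ∑ k, n * lam / 2 * |βhat k - βstar k| := by
          refine Finset.sum_le_sum fun k _ => ?_
          rw [abs_mul, mul_comm]
          exact mul_le_mul_of_nonneg_right (hck k) (abs_nonneg _)
  have hkey : ∑ k, |βhat k| ≤ (1/2) * ∑ k, |βhat k - βstar k| + ∑ k, |βstar k| := by
    have h1 : (∑ i, ε i * D i) / n ≤ (lam / 2) * ∑ k, |βhat k - βstar k| := by
      rw [div_le_iff₀ hnpos]
      have he : (n * lam / 2) * ∑ k, |βhat k - βstar k|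
          = (lam / 2 * ∑ k, |βhat k - βstar k|) * n := by ring
      linarith [hTle]
    have h3 : lam * ∑ k, |βhat k| ≤ lam * ((1/2) * ∑ k, |βhat k - βstar k| + ∑ k, |βstar k|) := by
      have he : lam * ((1/2) * ∑ k, |βhat k - βstar k| + ∑ k, |βstar k|)
          = (lam / 2) * ∑ k, |βhat k - βstar k| + lam * ∑ k, |βstar k| := by ring
      linarith [hbasic, h1]
    exact le_of_mul_le_mul_left h3 hlam
  -- split sums over S and Sᶜ
  have hsplit1 : ∑ k ∈ S, |βhat k| + ∑ k ∈ Sᶜ, |βhat k| = ∑ k, |βhat k| :=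
    Finset.sum_add_sum_compl S _
  have hsplit2 : ∑ k ∈ S, |βhat k - βstar k| + ∑ k ∈ Sᶜ, |βhat k - βstar k|
      = ∑ k, |βhat k - βstar k| := Finset.sum_add_sum_compl S _
  have hzero : ∀ k ∈ Sᶜ, βstar k = 0 := by
    intro k hk
    rw [Finset.mem_compl, hS] at hk
    exact not_not.mp hk
  have hBstar : ∑ k, |βstar k| = ∑ k ∈ S, |βstar k| := by
    rw [← Finset.sum_add_sum_compl S fun k => |βstar k|]
    have hz : ∑ k ∈ Sᶜ, |βstar k| = 0 :=
      Finset.sum_eq_zero fun k hk => by rw [hzero k hk, abs_zero]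
    rw [hz, add_zero]
  have hSc : ∑ k ∈ Sᶜ, |βhat k| = ∑ k ∈ Sᶜ, |βhat k - βstar k| :=
    Finset.sum_congr rfl fun k hk => by rw [hzero k hk, sub_zero]
  have htri : ∑ k ∈ S, |βstar k| ≤ ∑ k ∈ S, |βhat k| + ∑ k ∈ S, |βhat k - βstar k| := by
    rw [← Finset.sum_add_distrib]
    refine Finset.sum_le_sum fun k _ => ?_
    have := abs_sub_abs_le_abs_sub (βstar k) (βhat k)
    rw [abs_sub_comm] at this
    linarith
  linarith [hkey, hsplit1, hsplit2, hBstar, hSc, htri]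
end

section
/- (Slow-rate prediction bound for the Lasso.) Let X ∈ ℝ^{n×p}, β* ∈ ℝ^p, ε ∈ ℝ^n, and y = Xβ* + ε. Suppose λ > 0 satisfies λ ≥ (2/n) max_{1≤k≤p} |⟨X_{·k}, ε⟩|, and let β̂ be a global minimizer of (1/(2n))‖y − Xβ‖₂² + λ‖β‖₁. Then (1/n)‖X(β̂ − β*)‖₂² ≤ 3 λ ‖β*‖₁. In particular, if ‖β*‖₁ ≤ h, the in-sample prediction error is at most 3λh. -/
private lemma lasso_aux {c a b a' b' : ℝ} (hc : 0 < c)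
    (h : (1 / c) * a + b ≤ (1 / c) * a' + b') : a + c * b ≤ a' + c * b' := by
  have h' := mul_le_mul_of_nonneg_left h hc.le
  have e1 : c * ((1 / c) * a + b) = a + c * b := by field_simp
  have e2 : c * ((1 / c) * a' + b') = a' + c * b' := by field_simp
  rw [e1, e2] at h'
  exact h'

/-- Slow-rate prediction bound for the Lasso: if `y = Xβ* + ε`,
`λ ≥ (2/n) max_k |⟨X_{·k}, ε⟩|`, and `β̂` is a global minimizer of the Lasso objective,
then `(1/n)‖X(β̂ - β*)‖₂² ≤ 3λ‖β*‖₁`; in particular, if `‖β*‖₁ ≤ h`, the in-sample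
prediction error is at most `3λh`. -/
theorem lasso_slow_rate
    (n p : ℕ) (hn : 0 < n)
    (X : Matrix (Fin n) (Fin p) ℝ) (βstar : Fin p → ℝ) (ε : Fin n → ℝ)
    (y : Fin n → ℝ) (hy : y = X.mulVec βstar + ε)
    (lam : ℝ) (hlam : 0 < lam)
    (hlam_ge : ∀ k : Fin p, (2 / n) * |∑ i, X i k * ε i| ≤ lam)
    (βhat : Fin p → ℝ)
    (hmin : ∀ β : Fin p → ℝ,
      (1 / (2 * n)) * ∑ i, (y i - X.mulVec βhat i) ^ 2 + lam * ∑ k, |βhat k|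
        ≤ (1 / (2 * n)) * ∑ i, (y i - X.mulVec β i) ^ 2 + lam * ∑ k, |β k|) :
    (1 / n) * ∑ i, (X.mulVec (βhat - βstar) i) ^ 2 ≤ 3 * lam * ∑ k, |βstar k| ∧
    ∀ h : ℝ, (∑ k, |βstar k|) ≤ h →
      (1 / n) * ∑ i, (X.mulVec (βhat - βstar) i) ^ 2 ≤ 3 * lam * h := by
  have hnR : (0 : ℝ) < n := by exact_mod_cast hn
  set Δ : Fin p → ℝ := βhat - βstar with hΔ
  set D := ∑ i, (X.mulVec Δ i) ^ 2 with hD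
  set T := ∑ i, ε i * X.mulVec Δ i with hT
  set S0 := ∑ i, (ε i) ^ 2 with hS0
  set Bh := ∑ k, |βhat k| with hBh
  set Bs := ∑ k, |βstar k| with hBs
  -- residual identity
  have hres : ∀ i, y i - X.mulVec βhat i = ε i - X.mulVec Δ i := by
    intro i
    have : X.mulVec Δ i = X.mulVec βhat i - X.mulVec βstar i := by
      rw [hΔ, Matrix.mulVec_sub]; rfl
    rw [hy]; simp [this]; ring
  have hres' : ∀ i, y i - X.mulVec βstar i = ε i := by
    intro i; rw [hy]; simp
  have hSum1 : ∑ i, (y i - X.mulVec βhat i) ^ 2 = S0 - 2 * T + D := by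
    rw [hS0, hT, hD, Finset.mul_sum, ← Finset.sum_sub_distrib, ← Finset.sum_add_distrib]
    apply Finset.sum_congr rfl
    intro i _
    rw [hres i]; ring
  have hSum0 : ∑ i, (y i - X.mulVec βstar i) ^ 2 = S0 := by
    apply Finset.sum_congr rfl
    intro i _
    rw [hres' i]
  have key := hmin βstar
  rw [hSum1, hSum0] at key
  -- multiply through by 2n
  have h2n : (0 : ℝ) < 2 * n := by positivity
  have hkey : (S0 - 2 * T + D) + (2 * n) * (lam * Bh) ≤ S0 + (2 * n) * (lam * Bs) :=
    lasso_aux h2n key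
  -- bound on T
  have hck : ∀ k : Fin p, |∑ i, X i k * ε i| ≤ n * lam / 2 := by
    intro k
    have h1 := hlam_ge k
    rw [div_mul_eq_mul_div, div_le_iff₀ hnR] at h1
    linarith
  have hTeq : T = ∑ k, Δ k * ∑ i, X i k * ε i := by
    have hterm : ∀ i, ε i * X.mulVec Δ i = ∑ k, Δ k * (X i k * ε i) := by
      intro i
      simp only [Matrix.mulVec, dotProduct, Finset.mul_sum]
      apply Finset.sum_congr rfl
      intro k _
      ring
    rw [hT, Finset.sum_congr rfl (fun i _ => hterm i), Finset.sum_comm]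
    apply Finset.sum_congr rfl
    intro k _
    exact (Finset.mul_sum _ _ _).symm
  have hTabs : |T| ≤ (n * lam / 2) * ∑ k, |Δ k| := by
    rw [hTeq]
    calc |∑ k, Δ k * ∑ i, X i k * ε i| ≤ ∑ k, |Δ k * ∑ i, X i k * ε i| :=
          Finset.abs_sum_le_sum_abs _ _
      _ ≤ ∑ k, |Δ k| * (n * lam / 2) := by
          apply Finset.sum_le_sum
          intro k _
          rw [abs_mul]
          exact mul_le_mul_of_nonneg_left (hck k) (abs_nonneg _)
      _ = (n * lam / 2) * ∑ k, |Δ k| := by rw [← Finset.sum_mul]; ring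
  have hΔ1 : ∑ k, |Δ k| ≤ Bh + Bs := by
    rw [hBh, hBs, ← Finset.sum_add_distrib]
    apply Finset.sum_le_sum
    intro k _
    exact abs_sub (βhat k) (βstar k)
  have h3 : |T| ≤ (n * lam / 2) * (Bh + Bs) := by
    refine hTabs.trans ?_
    apply mul_le_mul_of_nonneg_left hΔ1
    positivity
  have hTle : T ≤ |T| := le_abs_self T
  have hBh0 : 0 ≤ Bh := Finset.sum_nonneg fun k _ => abs_nonneg _
  have hmBh : 0 ≤ n * lam * Bh := by positivity
  have hDle : D ≤ 3 * (n * lam) * Bs := by nlinarith [hkey, hTle, h3, hmBh]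
  have hmain : (1 / (n : ℝ)) * D ≤ 3 * lam * Bs := by
    have h4 : (1 / (n : ℝ)) * D ≤ (1 / (n : ℝ)) * (3 * (n * lam) * Bs) := by
      apply mul_le_mul_of_nonneg_left hDle
      positivity
    have h5 : (1 / (n : ℝ)) * (3 * (n * lam) * Bs) = 3 * lam * Bs := by
      field_simp
    linarith
  refine ⟨hmain, ?_⟩
  intro h hh
  have h6 : 3 * lam * Bs ≤ 3 * lam * h := by
    apply mul_le_mul_of_nonneg_left hh
    positivity
  linarith
end

section
/- (Fast-rate estimation bound for the Lasso under a restricted eigenvalue condition.) Let X ∈ ℝ^{n×p}, β* ∈ ℝ^p with support S of cardinality |S| ≤ s ≥ 1, ε ∈ ℝ^n, and y = Xβ* + ε. Suppose λ ≥ (2/n) max_{1≤k≤p} |⟨X_{·k}, ε⟩|, and suppose the restricted eigenvalue condition holds with constant κ > 0: for every v ∈ ℝ^p with ∑_{k∉S}|v_k| ≤ 3∑_{k∈S}|v_k|, one has (1/n)‖Xv‖₂² ≥ κ‖v‖₂². Then any global minimizer β̂ of (1/(2n))‖y − Xβ‖₂² + λ‖β‖₁ satisfies ‖β̂ − β*‖₂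 ≤ 3λ√s/κ and ‖β̂ − β*‖₁ ≤ 12 λ s / κ. -/
/-!
With `v = β̂ - β*`, comparing the Lasso objective at `β̂` and at `β*` gives the basic inequality
`(1/2n)‖Xv‖² ≤ (1/n)⟨v, Xᵀε⟩ + λ(‖β*‖₁ - ‖β̂‖₁)`. The choice of `λ` bounds the noise term by
`(λ/2)‖v‖₁`, and since `β*` vanishes off `S` the penalty difference is at most `‖v_S‖₁ - ‖v_{Sᶜ}‖₁`.
Hence `(1/n)‖Xv‖² ≤ λ(3‖v_S‖₁ - ‖v_{Sᶜ}‖₁)`: the error lies in the cone of the restricted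
eigenvalue condition, so `κ‖v‖₂² ≤ 3λ‖v_S‖₁ ≤ 3λ√s‖v‖₂`, and `‖v‖₁ ≤ 4‖v_S‖₁` gives the `ℓ₁` rate.
-/

open Finset Matrix

variable {m ι : Type*} [Fintype m] [Fintype ι]

theorem penalized_least_squares_basic_inequality (pen : (ι → ℝ) → ℝ) (c : ℝ) (X : Matrix m ι ℝ)
    (βstar βhat : ι → ℝ) (ε : m → ℝ)
    (hmin : c * ∑ i, (X *ᵥ βstar + ε - X *ᵥ βhat) i ^ 2 + pen βhat
      ≤ c * ∑ i, ε i ^ 2 + pen βstar) :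
    c * ∑ i, (X *ᵥ (βhat - βstar)) i ^ 2
      ≤ 2 * c * ((βhat - βstar) ⬝ᵥ (Xᵀ *ᵥ ε)) + (pen βstar - pen βhat) := by
  set w := X *ᵥ (βhat - βstar)
  have hres : X *ᵥ βstar + ε - X *ᵥ βhat = ε - w := by
    simp only [w, mulVec_sub]; abel
  have hcross : (βhat - βstar) ⬝ᵥ (Xᵀ *ᵥ ε) = ∑ i, ε i * w i := by
    rw [mulVec_transpose, dotProduct_comm, ← dotProduct_mulVec]; rfl
  have hexpand : ∑ i, (ε - w) i ^ 2 = ∑ i, ε i ^ 2 - 2 * ∑ i, ε i * w i + ∑ i, w i ^ 2 := by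
    simp only [Pi.sub_apply, sub_sq, sum_add_distrib, sum_sub_distrib, mul_sum, mul_assoc]
  rw [hres, hexpand] at hmin
  rw [hcross]
  linarith

theorem dotProduct_le_mul_sum_abs {v c : ι → ℝ} {M : ℝ} (hc : ∀ k, |c k| ≤ M) :
    v ⬝ᵥ c ≤ M * ∑ k, |v k| := by
  rw [mul_sum]
  refine sum_le_sum fun k _ => ?_
  calc v k * c k ≤ |v k| * |c k| := by rw [← abs_mul]; exact le_abs_self _
    _ ≤ M * |v k| := by rw [mul_comm]; exact mul_le_mul_of_nonneg_right (hc k) (abs_nonneg _)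

theorem sum_abs_sub_sum_abs_le [DecidableEq ι] {βstar : ι → ℝ} (βhat : ι → ℝ) {S : Finset ι}
    (hS : ∀ k ∉ S, βstar k = 0) :
    ∑ k, |βstar k| - ∑ k, |βhat k|
      ≤ ∑ k ∈ S, |(βhat - βstar) k| - ∑ k ∈ Sᶜ, |(βhat - βstar) k| := by
  have hout : ∑ k ∈ Sᶜ, |βstar k| = 0 :=
    sum_eq_zero fun k hk => by rw [hS k (mem_compl.1 hk), abs_zero]
  have hhat : ∑ k ∈ Sᶜ, |βhat k| = ∑ k ∈ Sᶜ, |(βhat - βstar) k| :=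
    sum_congr rfl fun k hk => by rw [Pi.sub_apply, hS k (mem_compl.1 hk), sub_zero]
  have hin : ∑ k ∈ S, |βstar k| - ∑ k ∈ S, |βhat k| ≤ ∑ k ∈ S, |(βhat - βstar) k| := by
    rw [← sum_sub_distrib]
    exact sum_le_sum fun k _ => abs_sub_comm (βhat k) (βstar k) ▸ abs_sub_abs_le_abs_sub _ _
  rw [← sum_add_sum_compl S, ← sum_add_sum_compl S (fun k => |βhat k|), hout, hhat]
  linarith

theorem sum_abs_le_sqrt_card_mul_sqrt_sum_sq (S : Finset ι) (v : ι → ℝ) :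
    ∑ k ∈ S, |v k| ≤ √(#S) * √(∑ k, v k ^ 2) := by
  rw [← Real.sqrt_mul (Nat.cast_nonneg _)]
  refine Real.le_sqrt_of_sq_le (sq_sum_le_card_mul_sum_sq.trans ?_)
  simp only [sq_abs]
  exact mul_le_mul_of_nonneg_left
    (sum_le_sum_of_subset_of_nonneg (subset_univ S) fun k _ _ => sq_nonneg _) (Nat.cast_nonneg _)

theorem lasso_prediction_error_le [DecidableEq ι] (n : ℕ) (X : Matrix m ι ℝ) {βstar : ι → ℝ}
    (βhat : ι → ℝ) (ε : m → ℝ) {S : Finset ι} (hS : ∀ k ∉ S, βstar k = 0) {lam : ℝ} (hlam₀ : 0 ≤ lam)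
    (hlam : ∀ k, (2 / n) * |(Xᵀ *ᵥ ε) k| ≤ lam)
    (hmin : (1 / (2 * n)) * ∑ i, (X *ᵥ βstar + ε - X *ᵥ βhat) i ^ 2 + lam * ∑ k, |βhat k|
      ≤ (1 / (2 * n)) * ∑ i, ε i ^ 2 + lam * ∑ k, |βstar k|) :
    (1 / n) * ∑ i, (X *ᵥ (βhat - βstar)) i ^ 2
      ≤ lam * (3 * ∑ k ∈ S, |(βhat - βstar) k| - ∑ k ∈ Sᶜ, |(βhat - βstar) k|) := by
  have hbasic := penalized_least_squares_basic_inequality (fun β => lam * ∑ k, |β k|) _ X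
    βstar βhat ε hmin
  have hnoise : (1 / n : ℝ) * ((βhat - βstar) ⬝ᵥ (Xᵀ *ᵥ ε))
      ≤ lam / 2 * ∑ k, |(βhat - βstar) k| := by
    rw [← smul_eq_mul, ← dotProduct_smul]
    refine dotProduct_le_mul_sum_abs fun k => ?_
    rw [Pi.smul_apply, smul_eq_mul, abs_mul, abs_of_nonneg (by positivity)]
    linarith [show (2 / n : ℝ) * |(Xᵀ *ᵥ ε) k| = 2 * (1 / n * |(Xᵀ *ᵥ ε) k|) by ring, hlam k]
  have hpen := mul_le_mul_of_nonneg_left (sum_abs_sub_sum_abs_le βhat hS) hlam₀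
  rw [← sum_add_sum_compl S] at hnoise
  have hscale : (1 / (2 * n) : ℝ) = 1 / 2 * (1 / n) := by rw [one_div_mul_one_div]
  rw [hscale] at hbasic
  linarith

theorem le_div_of_mul_sq_le_mul {κ N B : ℝ} (hκ : 0 < κ) (hN : 0 ≤ N) (hB : 0 ≤ B)
    (h : κ * N ^ 2 ≤ B * N) : N ≤ B / κ := by
  rw [le_div_iff₀ hκ]
  rcases hN.eq_or_lt with rfl | hpos
  · simpa using hB
  · nlinarith

theorem lasso_fast_rate_general
    (n p : ℕ)
    (X : Matrix (Fin n) (Fin p) ℝ) (βstar : Fin p → ℝ) (ε : Fin n → ℝ)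
    (y : Fin n → ℝ) (hy : y = X.mulVec βstar + ε)
    (S : Finset (Fin p)) (hS : ∀ k, k ∈ S ↔ βstar k ≠ 0)
    (s : ℕ) (hcard : S.card ≤ s)
    (lam : ℝ) (hlam : 0 < lam)
    (hlam_ge : ∀ k : Fin p, (2 / n) * |∑ i, X i k * ε i| ≤ lam)
    (κ : ℝ) (hκ : 0 < κ)
    (hRE : ∀ v : Fin p → ℝ,
      (∑ k ∈ Sᶜ, |v k| ≤ 3 * ∑ k ∈ S, |v k|) →
      κ * ∑ k, (v k) ^ 2 ≤ (1 / n) * ∑ i, (X.mulVec v i) ^ 2)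
    (βhat : Fin p → ℝ)
    (hmin : ∀ β : Fin p → ℝ,
      (1 / (2 * n)) * ∑ i, (y i - X.mulVec βhat i) ^ 2 + lam * ∑ k, |βhat k|
        ≤ (1 / (2 * n)) * ∑ i, (y i - X.mulVec β i) ^ 2 + lam * ∑ k, |β k|) :
    Real.sqrt (∑ k, (βhat k - βstar k) ^ 2) ≤ 3 * lam * Real.sqrt s / κ ∧
    ∑ k, |βhat k - βstar k| ≤ 12 * lam * s / κ := by
  set v := βhat - βstar
  have hsupp : ∀ k ∉ S, βstar k = 0 := fun k hk => not_not.1 (mt (hS k).2 hk)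
  have hpred := lasso_prediction_error_le n X βhat ε hsupp hlam.le hlam_ge
    (by simpa [hy] using hmin βstar)
  have hpred_nonneg : 0 ≤ (1 / n : ℝ) * ∑ i, (X *ᵥ v) i ^ 2 := by positivity
  have hcone : ∑ k ∈ Sᶜ, |v k| ≤ 3 * ∑ k ∈ S, |v k| :=
    sub_nonneg.1 (nonneg_of_mul_nonneg_right (hpred_nonneg.trans hpred) hlam)
  have hSc_nonneg : 0 ≤ ∑ k ∈ Sᶜ, |v k| := sum_nonneg fun k _ => abs_nonneg _
  have hl1_S : ∑ k ∈ S, |v k| ≤ √s * √(∑ k, v k ^ 2) :=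
    (sum_abs_le_sqrt_card_mul_sqrt_sum_sq S v).trans <| mul_le_mul_of_nonneg_right
      (Real.sqrt_le_sqrt (by exact_mod_cast hcard)) (Real.sqrt_nonneg _)
  have hl2 : √(∑ k, v k ^ 2) ≤ 3 * lam * √s / κ := by
    refine le_div_of_mul_sq_le_mul hκ (Real.sqrt_nonneg _) (by positivity) ?_
    rw [Real.sq_sqrt (sum_nonneg fun k _ => sq_nonneg _)]
    nlinarith [hRE v hcone]
  refine ⟨hl2, ?_⟩
  calc ∑ k, |v k| = ∑ k ∈ S, |v k| + ∑ k ∈ Sᶜ, |v k| := (sum_add_sum_compl S _).symm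
    _ ≤ 4 * (√s * (3 * lam * √s / κ)) := by nlinarith [Real.sqrt_nonneg s]
    _ = 12 * lam * (√s * √s) / κ := by ring
    _ = 12 * lam * s / κ := by rw [Real.mul_self_sqrt (Nat.cast_nonneg s)]

/-- Fast-rate estimation bound for the Lasso under a restricted eigenvalue
condition: if `y = Xβ* + ε`, `β*` has support `S` with `|S| ≤ s`, `s ≥ 1`,
`λ ≥ (2/n) max_k |⟨X_{·k}, ε⟩|`, and the restricted eigenvalue condition
`(1/n)‖Xv‖₂² ≥ κ‖v‖₂²` holds with `κ > 0` for every `v` in the cone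
`∑_{k∉S}|v_k| ≤ 3∑_{k∈S}|v_k|`, then any Lasso minimizer `β̂` satisfies
`‖β̂ - β*‖₂ ≤ 3λ√s/κ` and `‖β̂ - β*‖₁ ≤ 12λs/κ`. -/
theorem lasso_fast_rate
    (n p : ℕ) (hn : 0 < n)
    (X : Matrix (Fin n) (Fin p) ℝ) (βstar : Fin p → ℝ) (ε : Fin n → ℝ)
    (y : Fin n → ℝ) (hy : y = X.mulVec βstar + ε)
    (S : Finset (Fin p)) (hS : ∀ k, k ∈ S ↔ βstar k ≠ 0)
    (s : ℕ) (hs : 1 ≤ s) (hcard : S.card ≤ s)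
    (lam : ℝ) (hlam : 0 < lam)
    (hlam_ge : ∀ k : Fin p, (2 / n) * |∑ i, X i k * ε i| ≤ lam)
    (κ : ℝ) (hκ : 0 < κ)
    (hRE : ∀ v : Fin p → ℝ,
      (∑ k ∈ Sᶜ, |v k| ≤ 3 * ∑ k ∈ S, |v k|) →
      κ * ∑ k, (v k) ^ 2 ≤ (1 / n) * ∑ i, (X.mulVec v i) ^ 2)
    (βhat : Fin p → ℝ)
    (hmin : ∀ β : Fin p → ℝ,
      (1 / (2 * n)) * ∑ i, (y i - X.mulVec βhat i) ^ 2 + lam * ∑ k, |βhat k|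
        ≤ (1 / (2 * n)) * ∑ i, (y i - X.mulVec β i) ^ 2 + lam * ∑ k, |β k|) :
    Real.sqrt (∑ k, (βhat k - βstar k) ^ 2) ≤ 3 * lam * Real.sqrt s / κ ∧
    ∑ k, |βhat k - βstar k| ≤ 12 * lam * s / κ :=
  lasso_fast_rate_general n p X βstar ε y hy S hS s hcard lam hlam hlam_ge κ hκ hRE βhat hmin
end

section
/- (ℓ1 stability of the Lasso under approximate sparsity.) Let X ∈ ℝ^{n×p}, β* ∈ ℝ^p, ε ∈ ℝ^n, and y = Xβ* + ε. Suppose λ > 0 satisfies λ ≥ (2/n) max_{1≤k≤p} |⟨X_{·k}, ε⟩|, and let β̂ be a global minimizer of (1/(2n))‖y − Xβ‖₂² + λ‖β‖₁. Then ‖β̂‖₁ ≤ 3‖β*‖₁ and hence ‖β̂ − β*‖₁ ≤ 4‖β*‖₁. In particular, if ‖β*‖₁ ≤ h then ‖β̂ − β*‖₂² ≤ ‖β̂ − β*‖₁² ≤ 16 h². -/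
/-- ℓ1 stability of the Lasso under approximate sparsity: if `y = Xβ* + ε`,
`λ ≥ (2/n) max_k |⟨X_{·k}, ε⟩|`, and `β̂` is a global minimizer of the Lasso objective, then
`‖β̂‖₁ ≤ 3‖β*‖₁` and hence `‖β̂ - β*‖₁ ≤ 4‖β*‖₁`; in particular, if `‖β*‖₁ ≤ h` then
`‖β̂ - β*‖₂² ≤ ‖β̂ - β*‖₁² ≤ 16h²`. -/
theorem lasso_l1_stability
    (n p : ℕ) (hn : 0 < n)
    (X : Matrix (Fin n) (Fin p) ℝ) (βstar : Fin p → ℝ) (ε : Fin n → ℝ)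
    (y : Fin n → ℝ) (hy : y = X.mulVec βstar + ε)
    (lam : ℝ) (hlam : 0 < lam)
    (hlam_ge : ∀ k : Fin p, (2 / n) * |∑ i, X i k * ε i| ≤ lam)
    (βhat : Fin p → ℝ)
    (hmin : ∀ β : Fin p → ℝ,
      (1 / (2 * n)) * ∑ i, (y i - X.mulVec βhat i) ^ 2 + lam * ∑ k, |βhat k|
        ≤ (1 / (2 * n)) * ∑ i, (y i - X.mulVec β i) ^ 2 + lam * ∑ k, |β k|) :
    (∑ k, |βhat k| ≤ 3 * ∑ k, |βstar k|) ∧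
    (∑ k, |βhat k - βstar k| ≤ 4 * ∑ k, |βstar k|) ∧
    (∀ h : ℝ, (∑ k, |βstar k|) ≤ h →
      (∑ k, (βhat k - βstar k) ^ 2) ≤ (∑ k, |βhat k - βstar k|) ^ 2 ∧
      (∑ k, |βhat k - βstar k|) ^ 2 ≤ 16 * h ^ 2) := by
  have hn' : (0:ℝ) < n := by exact_mod_cast hn
  set v : Fin n → ℝ := fun i => ∑ k, X i k * (βhat k - βstar k) with hvdef
  have hv : ∀ i, y i - X.mulVec βhat i = ε i - v i := by
    intro i
    simp only [hy, Pi.add_apply, Matrix.mulVec, dotProduct, hvdef]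
    rw [show (∑ k, X i k * (βhat k - βstar k))
        = ∑ k, (X i k * βhat k - X i k * βstar k) from by
      exact Finset.sum_congr rfl fun k _ => by ring]
    rw [Finset.sum_sub_distrib]
    ring
  have he : ∀ i, y i - X.mulVec βstar i = ε i := by
    intro i
    simp [hy, Pi.add_apply]
  have key := hmin βstar
  simp only [hv, he] at key
  have hexp : ∑ i, (ε i - v i)^2
      = ∑ i, (ε i)^2 - 2 * ∑ i, ε i * v i + ∑ i, (v i)^2 := by
    rw [show (∑ i, (ε i - v i)^2)
        = ∑ i, ((ε i)^2 - 2 * (ε i * v i) + (v i)^2) from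
      Finset.sum_congr rfl fun i _ => by ring]
    rw [Finset.sum_add_distrib, Finset.sum_sub_distrib, Finset.mul_sum]
  have hswap : ∑ i, ε i * v i
      = ∑ k, (∑ i, X i k * ε i) * (βhat k - βstar k) := by
    simp only [hvdef, Finset.mul_sum]
    rw [Finset.sum_comm]
    refine Finset.sum_congr rfl fun k _ => ?_
    rw [Finset.sum_mul]
    exact Finset.sum_congr rfl fun i _ => by ring
  -- bound on cross term
  have hbound : ∑ i, ε i * v i ≤ (n * lam / 2) * ∑ k, |βhat k - βstar k| := by
    rw [hswap, Finset.mul_sum]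
    refine Finset.sum_le_sum fun k _ => ?_
    have h1 : (∑ i, X i k * ε i) * (βhat k - βstar k)
        ≤ |∑ i, X i k * ε i| * |βhat k - βstar k| := by
      calc (∑ i, X i k * ε i) * (βhat k - βstar k)
          ≤ |(∑ i, X i k * ε i) * (βhat k - βstar k)| := le_abs_self _
        _ = |∑ i, X i k * ε i| * |βhat k - βstar k| := abs_mul _ _
    have h2 : |∑ i, X i k * ε i| ≤ n * lam / 2 := by
      have := hlam_ge k
      rw [div_mul_eq_mul_div, div_le_iff₀ hn'] at this
      nlinarith
    calc (∑ i, X i k * ε i) * (βhat k - βstar k)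
        ≤ |∑ i, X i k * ε i| * |βhat k - βstar k| := h1
      _ ≤ (n * lam / 2) * |βhat k - βstar k| :=
          mul_le_mul_of_nonneg_right h2 (abs_nonneg _)
  have hvsq : (0:ℝ) ≤ ∑ i, (v i)^2 := Finset.sum_nonneg fun i _ => sq_nonneg _
  have hDle : ∑ k, |βhat k - βstar k| ≤ ∑ k, |βhat k| + ∑ k, |βstar k| := by
    rw [← Finset.sum_add_distrib]
    exact Finset.sum_le_sum fun k _ => abs_sub _ _
  have hS : (0:ℝ) ≤ ∑ k, |βstar k| := Finset.sum_nonneg fun k _ => abs_nonneg _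
  have hD : (0:ℝ) ≤ ∑ k, |βhat k - βstar k| :=
    Finset.sum_nonneg fun k _ => abs_nonneg _
  rw [hexp] at key
  -- from key : (1/(2n)) * (∑ε² - 2∑εv + ∑v²) + λT ≤ (1/(2n)) * ∑ε² + λS
  have hmain : ∑ k, |βhat k| ≤ 3 * ∑ k, |βstar k| := by
    have h2n : (0:ℝ) < 2 * n := by positivity
    have key' : lam * ∑ k, |βhat k|
        ≤ lam * ∑ k, |βstar k| + (1 / (2*n)) * (2 * ∑ i, ε i * v i) := by
      nlinarith [mul_le_mul_of_nonneg_left hvsq (le_of_lt (one_div_pos.mpr h2n))]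
    have hc : (1 / (2*n)) * (2 * ∑ i, ε i * v i)
        ≤ (lam / 2) * ∑ k, |βhat k - βstar k| := by
      rw [div_mul_eq_mul_div, one_mul, div_le_iff₀ h2n]
      nlinarith
    nlinarith [mul_le_mul_of_nonneg_left hDle (le_of_lt (half_pos hlam))]
  refine ⟨hmain, ?_, ?_⟩
  · linarith
  · intro h hh
    constructor
    · have : ∀ k ∈ Finset.univ, (βhat k - βstar k)^2 = |βhat k - βstar k|^2 :=
        fun k _ => (sq_abs _).symm
      rw [Finset.sum_congr rfl this]
      exact Finset.sum_sq_le_sq_sum_of_nonneg fun k _ => abs_nonneg _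
    · nlinarith
end

section
/- (Tail bound for the ℓ2 norm off the top-s coordinates.) Let v ∈ ℝ^p, let s ≥ 1, and let T₀ ⊆ {1,…,p} with |T₀| = s be a set of indices of the s largest absolute entries of v (i.e., |v_j| ≤ |v_i| whenever j ∉ T₀ and i ∈ T₀). Then the restriction of v to the complement of T₀ satisfies ( ∑_{j ∉ T₀} v_j² )^{1/2} ≤ ‖v‖₁ / (2√s), where ‖v‖₁ = ∑_{i=1}^p |v_i|. -/
/-- Tail bound for the ℓ2 norm off the top-`s` coordinates: let `v ∈ ℝ^p`,
`s ≥ 1`, and let `T₀ ⊆ {1,…,p}` with `|T₀| = s` index `s` largest absolute entries of `v`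
(i.e. `|v_j| ≤ |v_i|` whenever `j ∉ T₀` and `i ∈ T₀`).  Then
`(∑_{j ∉ T₀} v_j²)^{1/2} ≤ ‖v‖₁/(2√s)`. -/
theorem l2_tail_of_top_s_coordinates
    (p : ℕ) (v : Fin p → ℝ) (s : ℕ) (hs : 1 ≤ s)
    (T₀ : Finset (Fin p)) (hcard : T₀.card = s)
    (htop : ∀ j ∉ T₀, ∀ i ∈ T₀, |v j| ≤ |v i|) :
    Real.sqrt (∑ j ∈ T₀ᶜ, (v j) ^ 2) ≤ (∑ i, |v i|) / (2 * Real.sqrt s) := by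
  set A : ℝ := ∑ i ∈ T₀, |v i| with hA
  set B : ℝ := ∑ j ∈ T₀ᶜ, |v j| with hB
  have hApos : 0 ≤ A := Finset.sum_nonneg fun i _ => abs_nonneg _
  have hBpos : 0 ≤ B := Finset.sum_nonneg fun i _ => abs_nonneg _
  have hspos : (0:ℝ) < s := by positivity
  -- each j outside T₀ satisfies s * |v j| ≤ A
  have hkey : ∀ j ∈ T₀ᶜ, (s:ℝ) * |v j| ≤ A := by
    intro j hj
    rw [Finset.mem_compl] at hj
    have : (s:ℝ) * |v j| = ∑ i ∈ T₀, |v j| := by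
      rw [Finset.sum_const, hcard, nsmul_eq_mul]
    rw [this]
    exact Finset.sum_le_sum fun i hi => htop j hj i hi
  have hsum : ∑ j ∈ T₀ᶜ, (v j) ^ 2 ≤ (A / s) * B := by
    rw [hB, Finset.mul_sum]
    refine Finset.sum_le_sum fun j hj => ?_
    have h1 : |v j| ≤ A / s := by
      rw [le_div_iff₀ hspos]; linarith [hkey j hj]
    calc (v j) ^ 2 = |v j| * |v j| := by rw [← sq_abs, sq]
      _ ≤ (A / s) * |v j| := mul_le_mul_of_nonneg_right h1 (abs_nonneg _)
  have hsumall : ∑ i, |v i| = A + B := by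
    rw [hA, hB, ← Finset.sum_add_sum_compl T₀ fun i => |v i|]
  have hAB : (A / s) * B ≤ (A + B) ^ 2 / (4 * s) := by
    rw [div_mul_eq_mul_div, div_le_div_iff₀ hspos (by positivity)]
    nlinarith [sq_nonneg (A - B), hspos]
  have h2 : Real.sqrt (∑ j ∈ T₀ᶜ, (v j) ^ 2) ≤ Real.sqrt ((A + B) ^ 2 / (4 * s)) :=
    Real.sqrt_le_sqrt (le_trans hsum hAB)
  refine h2.trans_eq ?_
  rw [hsumall, show (4:ℝ)*s = (2*Real.sqrt s)^2 by
    rw [mul_pow, Real.sq_sqrt hspos.le]; ring]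
  rw [Real.sqrt_div (sq_nonneg _), Real.sqrt_sq (by linarith), Real.sqrt_sq (by positivity)]
end
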